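/- The map q̃ : Σ̃ × ℝ^k → S_A defined by q̃(ξ, v) = θ_v(ξ) is a surjective group homomorphism whose kernel equals {(θ_{-v}(e), v) : v ∈ Γ}; moreover the map v ↦ (θ_{-v}(e), v) is a group isomorphism from Γ onto ker q̃. -/

import Mathlib

open scoped Matrix

noncomputable section

/-- The integer lattice `ℤ^k` inside `ℝ^k`. -/
def lattice (k : ℕ) : AddSubgroup (Fin k → ℝ) :=
  AddSubgroup.pi Set.univ fun _ => AddSubgroup.zmultiples (1 : ℝ)

/-- The torus `𝕋^k = ℝ^k / ℤ^k`. -/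
abbrev Torus (k : ℕ) := (Fin k → ℝ) ⧸ lattice k

/-- The canonical projection `ℝ^k → 𝕋^k`. -/
def torusProj (k : ℕ) : (Fin k → ℝ) →+ Torus k := QuotientAddGroup.mk' (lattice k)

lemma mem_lattice_iff {k : ℕ} {x : Fin k → ℝ} :
    x ∈ lattice k ↔ ∀ i, ∃ n : ℤ, (n : ℝ) = x i := by
  simp [lattice, AddSubgroup.mem_pi, AddSubgroup.mem_zmultiples_iff, zsmul_eq_mul, mul_one]

variable {k : ℕ}

/-- The real matrix associated with an integer matrix. -/
def Areal (A : Matrix (Fin k) (Fin k) ℤ) : Matrix (Fin k) (Fin k) ℝ :=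
  A.map (Int.cast : ℤ → ℝ)

lemma mulVec_lattice_mem (A : Matrix (Fin k) (Fin k) ℤ) {x : Fin k → ℝ}
    (hx : x ∈ lattice k) : Areal A *ᵥ x ∈ lattice k := by
  rw [mem_lattice_iff] at hx ⊢
  choose n hn using hx
  intro i
  refine ⟨∑ j, A i j * n j, ?_⟩
  have : (Areal A *ᵥ x) i = ∑ j, (A i j : ℝ) * x j := by
    simp [Areal, Matrix.mulVec, dotProduct, Matrix.map_apply]
  rw [this]
  push_cast
  exact Finset.sum_congr rfl fun j _ => by rw [hn j]

/-- The endomorphism of `𝕋^k` induced by the integer matrix `A`. -/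
def torusHom (A : Matrix (Fin k) (Fin k) ℤ) : Torus k →+ Torus k :=
  QuotientAddGroup.map (lattice k) (lattice k) (Areal A).mulVecLin.toAddMonoidHom
    (fun _ hx => mulVec_lattice_mem A hx)

lemma torusHom_proj (A : Matrix (Fin k) (Fin k) ℤ) (x : Fin k → ℝ) :
    torusHom A (torusProj k x) = torusProj k (Areal A *ᵥ x) :=
  QuotientAddGroup.map_mk' _ _ _ _ x

/-- The toral solenoid `S_A`, as an additive subgroup of `(𝕋^k)^ℕ`. -/
def solenoid (A : Matrix (Fin k) (Fin k) ℤ) : AddSubgroup (ℕ → Torus k) where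
  carrier := {ξ | ∀ j, ξ j = torusHom A (ξ (j + 1))}
  zero_mem' := by intro j; simp
  add_mem' := by
    intro a b ha hb j
    simp only [Pi.add_apply, map_add]
    rw [← ha j, ← hb j]
  neg_mem' := by
    intro a ha j
    simp only [Pi.neg_apply, map_neg]
    rw [← ha j]

lemma mem_solenoid {A : Matrix (Fin k) (Fin k) ℤ} {ξ : ℕ → Torus k} :
    ξ ∈ solenoid A ↔ ∀ j, ξ j = torusHom A (ξ (j + 1)) := Iff.rfl

/-- The inverse of the matrix `A` over `ℝ`. -/
def Ainv (A : Matrix (Fin k) (Fin k) ℤ) : Matrix (Fin k) (Fin k) ℝ := (Areal A)⁻¹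

lemma Areal_det_isUnit {A : Matrix (Fin k) (Fin k) ℤ} (hA : A.det ≠ 0) :
    IsUnit (Areal A).det := by
  have h : ((A.det : ℤ) : ℝ) = (Areal A).det :=
    RingHom.map_det (Int.castRingHom ℝ) A
  rw [← h]
  exact isUnit_iff_ne_zero.mpr (by exact_mod_cast hA)

/-- The map `θ_v` on sequences: `(θ_v ξ)_j = ξ_j + [A^{-j} v]`. -/
def thetaFun (A : Matrix (Fin k) (Fin k) ℤ) (v : Fin k → ℝ) (ξ : ℕ → Torus k) :
    ℕ → Torus k :=
  fun j => ξ j + torusProj k ((Ainv A ^ j) *ᵥ v)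

lemma thetaFun_mem (A : Matrix (Fin k) (Fin k) ℤ) (hA : A.det ≠ 0) (v : Fin k → ℝ)
    {ξ : ℕ → Torus k} (hξ : ξ ∈ solenoid A) : thetaFun A v ξ ∈ solenoid A := by
  rw [mem_solenoid] at hξ ⊢
  intro j
  have key : Areal A *ᵥ ((Ainv A ^ (j + 1)) *ᵥ v) = (Ainv A ^ j) *ᵥ v := by
    rw [Matrix.mulVec_mulVec]
    rw [pow_succ', ← Matrix.mul_assoc, Ainv, Matrix.mul_nonsing_inv _ (Areal_det_isUnit hA),
      Matrix.one_mul]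
  show ξ j + torusProj k ((Ainv A ^ j) *ᵥ v)
      = torusHom A (ξ (j + 1) + torusProj k ((Ainv A ^ (j + 1)) *ᵥ v))
  rw [map_add, torusHom_proj, key, ← hξ j]

/-- The homeomorphism `θ_v : S_A → S_A` (Definition 4.1 of the paper). -/
def theta (A : Matrix (Fin k) (Fin k) ℤ) (hA : A.det ≠ 0) (v : Fin k → ℝ)
    (ξ : ↥(solenoid A)) : ↥(solenoid A) :=
  ⟨thetaFun A v ξ, thetaFun_mem A hA v ξ.2⟩

/-- The right shift `σ_A` on sequences. -/
def shiftFun (A : Matrix (Fin k) (Fin k) ℤ) (ξ : ℕ → Torus k) : ℕ → Torus k :=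
  fun j => match j with
  | 0 => torusHom A (ξ 0)
  | j + 1 => ξ j

lemma shiftFun_mem (A : Matrix (Fin k) (Fin k) ℤ) {ξ : ℕ → Torus k}
    (hξ : ξ ∈ solenoid A) : shiftFun A ξ ∈ solenoid A := by
  rw [mem_solenoid] at hξ ⊢
  intro j
  match j with
  | 0 => rfl
  | j + 1 => exact hξ j

/-- The shift automorphism `σ_A : S_A → S_A`. -/
def sigma (A : Matrix (Fin k) (Fin k) ℤ) (ξ : ↥(solenoid A)) : ↥(solenoid A) :=
  ⟨shiftFun A ξ, shiftFun_mem A ξ.2⟩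

/-- The inverse shift `σ_A⁻¹` on sequences. -/
def shiftInvFun (ξ : ℕ → Torus k) : ℕ → Torus k := fun j => ξ (j + 1)

lemma shiftInvFun_mem (A : Matrix (Fin k) (Fin k) ℤ) {ξ : ℕ → Torus k}
    (hξ : ξ ∈ solenoid A) : shiftInvFun ξ ∈ solenoid A :=
  mem_solenoid.mpr fun j => mem_solenoid.mp hξ (j + 1)

/-- The inverse shift `σ_A⁻¹ : S_A → S_A`. -/
def sigmaInv (A : Matrix (Fin k) (Fin k) ℤ) (ξ : ↥(solenoid A)) : ↥(solenoid A) :=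
  ⟨shiftInvFun ξ, shiftInvFun_mem A ξ.2⟩

/-- Projection `p₀ : S_A → 𝕋^k` onto the zeroth coordinate. -/
def pZero (A : Matrix (Fin k) (Fin k) ℤ) : ↥(solenoid A) →+ Torus k :=
  (Pi.evalAddMonoidHom (fun _ : ℕ => Torus k) 0).comp (solenoid A).subtype

variable {k : ℕ}

lemma iterate_torusHom_zero (A : Matrix (Fin k) (Fin k) ℤ) (j : ℕ) :
    (⇑(torusHom A))^[j] (0 : Torus k) = 0 :=
  Function.iterate_fixed (map_zero _) j

lemma iterate_torusHom_eq_zero_mono (A : Matrix (Fin k) (Fin k) ℤ) {x : Torus k} {j m : ℕ}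
    (h : (⇑(torusHom A))^[j] x = 0) (hjm : j ≤ m) : (⇑(torusHom A))^[m] x = 0 := by
  obtain ⟨n, rfl⟩ := Nat.exists_eq_add_of_le hjm
  rw [add_comm, Function.iterate_add_apply, h, iterate_torusHom_zero]

/-- `Σ̃ = { ξ ∈ S_A : A^j (p₀ ξ) = [0] for some j ∈ ℕ }`, as a subgroup of `S_A`. -/
def SigmaTilde (A : Matrix (Fin k) (Fin k) ℤ) : AddSubgroup ↥(solenoid A) where
  carrier := {ξ | ∃ j : ℕ, (⇑(torusHom A))^[j] (pZero A ξ) = 0}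
  zero_mem' := ⟨0, by simp⟩
  add_mem' := by
    rintro a b ⟨ja, hja⟩ ⟨jb, hjb⟩
    refine ⟨max ja jb, ?_⟩
    rw [map_add, iterate_map_add,
      iterate_torusHom_eq_zero_mono A hja (le_max_left _ _),
      iterate_torusHom_eq_zero_mono A hjb (le_max_right _ _), add_zero]
  neg_mem' := by
    rintro a ⟨ja, hja⟩
    exact ⟨ja, by rw [map_neg, iterate_map_neg, hja, neg_zero]⟩

lemma pow_mulVec_lattice_mem (A : Matrix (Fin k) (Fin k) ℤ) (m : ℕ) {x : Fin k → ℝ}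
    (hx : x ∈ lattice k) : (Areal A ^ m) *ᵥ x ∈ lattice k := by
  induction m with
  | zero => simpa using hx
  | succ m ih =>
      rw [pow_succ', ← Matrix.mulVec_mulVec]
      exact mulVec_lattice_mem A ih

lemma pow_mulVec_lattice_mem_mono (A : Matrix (Fin k) (Fin k) ℤ) {v : Fin k → ℝ} {j m : ℕ}
    (h : (Areal A ^ j) *ᵥ v ∈ lattice k) (hjm : j ≤ m) :
    (Areal A ^ m) *ᵥ v ∈ lattice k := by
  obtain ⟨n, rfl⟩ := Nat.exists_eq_add_of_le hjm
  rw [add_comm, pow_add, ← Matrix.mulVec_mulVec]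
  exact pow_mulVec_lattice_mem A n h

/-- `Γ = { v ∈ ℝ^k : A^j v ∈ ℤ^k for some j ∈ ℕ }`, a subgroup of `ℝ^k` realizing
`ℤ^k[A⁻¹]`. -/
def Gamma (A : Matrix (Fin k) (Fin k) ℤ) : AddSubgroup (Fin k → ℝ) where
  carrier := {v | ∃ j : ℕ, (Areal A ^ j) *ᵥ v ∈ lattice k}
  zero_mem' := ⟨0, by simp [Matrix.mulVec_zero, zero_mem]⟩
  add_mem' := by
    rintro a b ⟨ja, hja⟩ ⟨jb, hjb⟩
    refine ⟨max ja jb, ?_⟩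
    rw [Matrix.mulVec_add]
    exact add_mem (pow_mulVec_lattice_mem_mono A hja (le_max_left _ _))
      (pow_mulVec_lattice_mem_mono A hjb (le_max_right _ _))
  neg_mem' := by
    rintro a ⟨ja, hja⟩
    exact ⟨ja, by rw [Matrix.mulVec_neg]; exact neg_mem hja⟩

/-- The map `q̃ : Σ̃ × ℝ^k → S_A`, `q̃(ξ, v) = θ_v ξ`. -/
def qtilde (A : Matrix (Fin k) (Fin k) ℤ) (hA : A.det ≠ 0)
    (p : ↥(SigmaTilde A) × (Fin k → ℝ)) : ↥(solenoid A) :=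
  theta A hA p.2 ↑p.1

/-!
Every `θ_v` is translation by `θ_v(e)`, and `v ↦ θ_v(e)` is a homomorphism `ℝ^k → S_A`; hence
`q̃` is a homomorphism and `q̃(ξ, v) = e` exactly when `ξ = θ_{-v}(e)`. The zeroth coordinate of
`θ_{-v}(e)` is `-[v]`, which some `A^j` kills exactly when `v ∈ Γ`. For surjectivity, translating
`η` by `θ_{-v}` with `[v] = η₀` lands in `Σ̃`.
-/

section Theta

variable {A : Matrix (Fin k) (Fin k) ℤ} (hA : A.det ≠ 0)

def thetaZeroHom : (Fin k → ℝ) →+ ↥(solenoid A) where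
  toFun v := theta A hA v 0
  map_zero' := by
    ext j
    simp [theta, thetaFun]
  map_add' v w := by
    ext j
    simp only [theta, thetaFun, AddSubgroup.coe_add, AddSubgroup.coe_zero, Pi.add_apply,
      Pi.zero_apply, zero_add, Matrix.mulVec_add, map_add]

lemma thetaZeroHom_apply (v : Fin k → ℝ) : thetaZeroHom hA v = theta A hA v 0 := rfl

lemma theta_eq_add (v : Fin k → ℝ) (ξ : ↥(solenoid A)) :
    theta A hA v ξ = ξ + thetaZeroHom hA v := by
  ext j
  simp [thetaZeroHom_apply, theta, thetaFun]

lemma pZero_theta (v : Fin k → ℝ) (ξ : ↥(solenoid A)) :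
    pZero A (theta A hA v ξ) = pZero A ξ + torusProj k v := by
  simp [pZero, theta, thetaFun]

lemma iterate_torusHom_proj (j : ℕ) (v : Fin k → ℝ) :
    (⇑(torusHom A))^[j] (torusProj k v) = torusProj k ((Areal A ^ j) *ᵥ v) := by
  induction j with
  | zero => simp
  | succ j ih =>
      rw [Function.iterate_succ_apply', ih, torusHom_proj, Matrix.mulVec_mulVec, ← pow_succ']

lemma theta_zero_mem_sigmaTilde_iff {v : Fin k → ℝ} :
    theta A hA v 0 ∈ SigmaTilde A ↔ v ∈ Gamma A := by
  have hproj : pZero A (theta A hA v 0) = torusProj k v := by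
    rw [pZero_theta, map_zero, zero_add]
  change (∃ j, _) ↔ ∃ j, _
  simp only [hproj, iterate_torusHom_proj]
  exact exists_congr fun _ => QuotientAddGroup.eq_zero_iff _

lemma theta_eq_zero_iff {v : Fin k → ℝ} {ξ : ↥(solenoid A)} :
    theta A hA v ξ = 0 ↔ ξ = theta A hA (-v) 0 := by
  rw [theta_eq_add, add_eq_zero_iff_eq_neg, ← map_neg, thetaZeroHom_apply]

lemma qtilde_add (p q : ↥(SigmaTilde A) × (Fin k → ℝ)) :
    qtilde A hA (p + q) = qtilde A hA p + qtilde A hA q := by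
  simp only [qtilde, theta_eq_add, Prod.snd_add, Prod.fst_add, AddSubgroup.coe_add, map_add]
  abel

lemma qtilde_surjective : Function.Surjective (qtilde A hA) := by
  intro η
  obtain ⟨v, hv⟩ := QuotientAddGroup.mk'_surjective (lattice k) ((η : ℕ → Torus k) 0)
  have hmem : theta A hA (-v) η ∈ SigmaTilde A := by
    refine ⟨0, ?_⟩
    rw [Function.iterate_zero_apply, pZero_theta, map_neg, add_neg_eq_zero]
    exact hv.symm
  refine ⟨(⟨_, hmem⟩, v), ?_⟩
  simp only [qtilde, theta_eq_add, add_assoc, ← map_add, neg_add_cancel, map_zero, add_zero]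

lemma qtilde_eq_zero_iff (p : ↥(SigmaTilde A) × (Fin k → ℝ)) :
    qtilde A hA p = 0 ↔ p.2 ∈ Gamma A ∧ (↑p.1 : ↥(solenoid A)) = theta A hA (-p.2) 0 := by
  obtain ⟨⟨ξ, hξ⟩, v⟩ := p
  change theta A hA v ξ = 0 ↔ _
  rw [theta_eq_zero_iff]
  refine ⟨fun h => ⟨?_, h⟩, fun h => h.2⟩
  simpa using neg_mem ((theta_zero_mem_sigmaTilde_iff hA).mp
    (h ▸ hξ : theta A hA (-v) 0 ∈ SigmaTilde A))

end Theta

theorem qtilde_surjective_ker_general (k : ℕ) (A : Matrix (Fin k) (Fin k) ℤ)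
    (hA : A.det ≠ 0) :
    (∀ p q : ↥(SigmaTilde A) × (Fin k → ℝ),
      qtilde A hA (p + q) = qtilde A hA p + qtilde A hA q) ∧
    Function.Surjective (qtilde A hA) ∧
    (∀ v ∈ Gamma A, theta A hA (-v) 0 ∈ SigmaTilde A) ∧
    (∀ p : ↥(SigmaTilde A) × (Fin k → ℝ),
      qtilde A hA p = 0 ↔ p.2 ∈ Gamma A ∧ (↑p.1 : ↥(solenoid A)) = theta A hA (-p.2) 0) ∧
    (∀ v w : Fin k → ℝ,
      theta A hA (-(v + w)) 0 = theta A hA (-v) 0 + theta A hA (-w) 0) ∧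
    Function.Injective (fun v : Fin k → ℝ => (theta A hA (-v) 0, v)) := by
  refine ⟨qtilde_add hA, qtilde_surjective hA,
    fun v hv => (theta_zero_mem_sigmaTilde_iff hA).mpr (neg_mem hv), qtilde_eq_zero_iff hA,
    fun v w => ?_, fun v w h => congrArg Prod.snd h⟩
  simp only [← thetaZeroHom_apply, neg_add, map_add]

/-- `q̃ : Σ̃ × ℝ^k → S_A`, `q̃(ξ, v) = θ_v ξ`, is a surjective group
homomorphism whose kernel is exactly `{(θ_{-v}(e), v) : v ∈ Γ}`; moreover `v ↦ (θ_{-v}(e), v)`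
is a group isomorphism from `Γ` onto `ker q̃` (it is additive, injective, and it maps `Γ` into
`Σ̃ × ℝ^k` with image the kernel). -/
theorem qtilde_surjective_ker (k : ℕ) (hk : 1 ≤ k) (A : Matrix (Fin k) (Fin k) ℤ)
    (hA : A.det ≠ 0) :
    (∀ p q : ↥(SigmaTilde A) × (Fin k → ℝ),
      qtilde A hA (p + q) = qtilde A hA p + qtilde A hA q) ∧
    Function.Surjective (qtilde A hA) ∧
    (∀ v ∈ Gamma A, theta A hA (-v) 0 ∈ SigmaTilde A) ∧
    (∀ p : ↥(SigmaTilde A) × (Fin k → ℝ),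
      qtilde A hA p = 0 ↔ p.2 ∈ Gamma A ∧ (↑p.1 : ↥(solenoid A)) = theta A hA (-p.2) 0) ∧
    (∀ v w : Fin k → ℝ,
      theta A hA (-(v + w)) 0 = theta A hA (-v) 0 + theta A hA (-w) 0) ∧
    Function.Injective (fun v : Fin k → ℝ => (theta A hA (-v) 0, v)) :=
  qtilde_surjective_ker_general k A hA

end
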